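/- arXiv:2510.04329 — 2 statements merged into one kernel-verified Lean document; each statement's English description precedes it below -/
import Mathlib

section
/- Let φ : [0,∞) → [0,∞) be nondecreasing with φ(0) = 0, and suppose that the Lebesgue integral ∫₀¹ 1/φ(s) ds = +∞ (with the convention 1/0 = +∞). Let v : [0,∞) → ℝ be continuous and satisfy 0 ≤ v(x) ≤ ∫₀ˣ φ(v(s)) ds for every x ≥ 0. Then v(x) = 0 for every x ≥ 0. -/
open MeasureTheory Set
open scoped ENNReal

/-- Simplified ("zero case") Bihari–LaSalle lemma: if `φ : [0,∞) → [0,∞)` is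
nondecreasing with `φ 0 = 0` and `∫₀¹ ds/φ(s) = +∞` (with `1/0 = +∞`), and
`v` is continuous, nonnegative and satisfies `v x ≤ ∫₀ˣ φ(v s) ds` for all
`x ≥ 0`, then `v ≡ 0` on `[0,∞)`. -/
theorem bihari_lasalle_zero_case
    (φ : ℝ → ℝ)
    (hφ_mono : MonotoneOn φ (Ici 0))
    (hφ_nonneg : ∀ s, 0 ≤ s → 0 ≤ φ s)
    (hφ0 : φ 0 = 0)
    (hφ_div : ∫⁻ s in Ioc (0:ℝ) 1, (ENNReal.ofReal (φ s))⁻¹ ∂volume = ⊤)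
    (v : ℝ → ℝ) (hv_cont : Continuous v)
    (hv_nonneg : ∀ x, 0 ≤ x → 0 ≤ v x)
    (hv_le : ∀ x, 0 ≤ x → v x ≤ ∫ s in (0:ℝ)..x, φ (v s)) :
    ∀ x, 0 ≤ x → v x = 0 := by
  -- monotone total extension of φ
  set φ' : ℝ → ℝ := fun u => φ (max u 0) with hφ'def
  have hφ'_mono : Monotone φ' := fun a b hab =>
    hφ_mono (le_max_right a 0) (le_max_right b 0) (max_le_max hab le_rfl)
  have hφ'_nonneg : ∀ u, 0 ≤ φ' u := fun u => hφ_nonneg _ (le_max_right u 0)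
  have hφ'_eq : ∀ u, 0 ≤ u → φ' u = φ u := fun u hu => by
    simp only [hφ'def, max_eq_left hu]
  have hφ'_meas : Measurable φ' := hφ'_mono.measurable
  have hv0 : v 0 = 0 := by
    have h1 := hv_le 0 le_rfl
    simp only [intervalIntegral.integral_same] at h1
    exact le_antisymm h1 (hv_nonneg 0 le_rfl)
  -- the divergence hypothesis, for φ'
  have hdiv' : ∫⁻ s in Ioc (0:ℝ) 1, (ENNReal.ofReal (φ' s))⁻¹ ∂volume = ⊤ := by
    rw [← hφ_div]
    refine setLIntegral_congr_fun measurableSet_Ioc (fun s hs => ?_)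
    rw [hφ'_eq s hs.1.le]
  intro x hx
  -- bound on v over [0, x]
  obtain ⟨z, hz, hzmax'⟩ := isCompact_Icc.exists_isMaxOn (nonempty_Icc.2 hx)
    hv_cont.continuousOn
  have hzmax : ∀ s ∈ Icc (0:ℝ) x, v s ≤ v z := fun s hs => hzmax' hs
  set M : ℝ := φ' (v z) with hMdef
  have hM0 : 0 ≤ M := hφ'_nonneg _
  -- integrability of φ' ∘ v on subintervals of [0, x]
  have hmeas_g : Measurable (fun s => φ' (v s)) := hφ'_meas.comp hv_cont.measurable
  have hInt : ∀ p q, p ∈ Icc 0 x → q ∈ Icc 0 x →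
      IntervalIntegrable (fun s => φ' (v s)) volume p q := by
    intro p q hp hq
    rw [intervalIntegrable_iff]
    refine Integrable.mono' (g := fun _ => M)
      (integrableOn_const measure_Ioc_lt_top.ne)
      (hmeas_g.aestronglyMeasurable.restrict) ?_
    refine (ae_restrict_iff' measurableSet_uIoc).2 (ae_of_all _ fun s hs => ?_)
    have hsx : s ∈ Icc 0 x := by
      have h1 : uIoc p q ⊆ uIcc p q := Ioc_subset_Icc_self
      have h2 : uIcc p q ⊆ Icc 0 x := by
        rw [← uIcc_of_le hx]
        exact uIcc_subset_uIcc (by rwa [uIcc_of_le hx]) (by rwa [uIcc_of_le hx])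
      exact h2 (h1 hs)
    rw [Real.norm_of_nonneg (hφ'_nonneg _)]
    exact hφ'_mono (hzmax s hsx)
  -- the primitive V
  set V : ℝ → ℝ := fun t => ∫ s in (0:ℝ)..t, φ' (v s) with hVdef
  have hV0 : V 0 = 0 := intervalIntegral.integral_same
  have hVdiff : ∀ p q, p ∈ Icc 0 x → q ∈ Icc 0 x →
      V q = V p + ∫ s in p..q, φ' (v s) := by
    intro p q hp hq
    rw [hVdef]
    exact (intervalIntegral.integral_add_adjacent_intervals
      (hInt 0 p (left_mem_Icc.2 hx) hp) (hInt p q hp hq)).symm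
  have hVle : ∀ t, t ∈ Icc 0 x → v t ≤ V t := by
    intro t ht
    refine le_trans (hv_le t ht.1) (le_of_eq ?_)
    refine intervalIntegral.integral_congr fun s hs => ?_
    rw [uIcc_of_le ht.1] at hs
    exact (hφ'_eq (v s) (hv_nonneg s hs.1)).symm
  have hVmono : ∀ p q, p ∈ Icc 0 x → q ∈ Icc 0 x → p ≤ q → V p ≤ V q := by
    intro p q hp hq hpq
    rw [hVdiff p q hp hq]
    have : 0 ≤ ∫ s in p..q, φ' (v s) :=
      intervalIntegral.integral_nonneg hpq fun s _ => hφ'_nonneg _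
    linarith
  have hVnonneg : ∀ t, t ∈ Icc 0 x → 0 ≤ V t := by
    intro t ht
    have := hVmono 0 t (left_mem_Icc.2 hx) ht ht.1
    rw [hV0] at this; exact this
  have hstep : ∀ p q, p ∈ Icc 0 x → q ∈ Icc 0 x → p ≤ q →
      V q - V p ≤ (q - p) * φ' (V q) := by
    intro p q hp hq hpq
    have hd := hVdiff p q hp hq
    have hb : ∫ s in p..q, φ' (v s) ≤ ∫ _ in p..q, φ' (V q) := by
      refine intervalIntegral.integral_mono_on hpq (hInt p q hp hq)
        intervalIntegrable_const fun s hs => ?_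
      have hsx : s ∈ Icc 0 x := ⟨le_trans hp.1 hs.1, le_trans hs.2 hq.2⟩
      exact hφ'_mono (le_trans (hVle s hsx) (hVmono s q hsx hq hs.2))
    rw [intervalIntegral.integral_const, smul_eq_mul] at hb
    linarith
  have hLip : ∀ p q, p ∈ Icc 0 x → q ∈ Icc 0 x → p ≤ q →
      V q - V p ≤ (q - p) * M := by
    intro p q hp hq hpq
    have hd := hVdiff p q hp hq
    have hb : ∫ s in p..q, φ' (v s) ≤ ∫ _ in p..q, M := by
      refine intervalIntegral.integral_mono_on hpq (hInt p q hp hq)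
        intervalIntegrable_const fun s hs => ?_
      exact hφ'_mono (hzmax s ⟨le_trans hp.1 hs.1, le_trans hs.2 hq.2⟩)
    rw [intervalIntegral.integral_const, smul_eq_mul] at hb
    linarith
  by_cases hc : ∃ c, 0 < c ∧ φ' c = 0
  · -- Case 1 : φ vanishes at some positive point
    obtain ⟨c, hc0, hφc⟩ := hc
    have key : ∀ s, s ∈ Icc 0 x → v s < c := by
      by_contra h
      push_neg at h
      obtain ⟨s₀, hs₀, hcs₀⟩ := h
      set S : Set ℝ := {t ∈ Icc 0 x | c ≤ v t} with hSdef
      have hScl : IsClosed S := (isClosed_Icc.inter (isClosed_le continuous_const hv_cont))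
      have hSne : S.Nonempty := ⟨s₀, hs₀, hcs₀⟩
      have hSbd : BddBelow S := ⟨0, fun t ht => ht.1.1⟩
      set τ := sInf S with hτdef
      have hτS : τ ∈ S := hScl.csInf_mem hSne hSbd
      have hτpos : 0 < τ := by
        rcases lt_or_eq_of_le hτS.1.1 with h | h
        · exact h
        · exfalso; have := hτS.2; rw [← h, hv0] at this; linarith
      have hless : ∀ s, s ∈ Ico 0 τ → v s < c := by
        intro s hs
        by_contra hge
        push_neg at hge
        have : s ∈ S := ⟨⟨hs.1, le_trans hs.2.le hτS.1.2⟩, hge⟩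
        exact absurd (csInf_le hSbd this) (not_le.2 hs.2)
      have hVτ : V τ = 0 := by
        show (∫ s in (0:ℝ)..τ, φ' (v s)) = 0
        have hne : ∀ᵐ s : ℝ, s ≠ τ := by
          refine ae_iff.2 ?_
          have he : {s : ℝ | ¬ s ≠ τ} = {τ} := by ext s; simp
          rw [he]; exact measure_singleton τ
        have hcongr : ∀ᵐ s : ℝ, s ∈ uIoc (0:ℝ) τ → φ' (v s) = (fun _ => (0:ℝ)) s := by
          filter_upwards [hne] with s hs hmem
          rw [uIoc_of_le hτpos.le] at hmem
          have hlt : s < τ := lt_of_le_of_ne hmem.2 hs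
          have h1 : φ' (v s) ≤ φ' c := hφ'_mono (hless s ⟨hmem.1.le, hlt⟩).le
          exact le_antisymm (hφc ▸ h1) (hφ'_nonneg _)
        rw [intervalIntegral.integral_congr_ae hcongr]
        simp
      have := hVle τ hτS.1
      rw [hVτ] at this
      linarith [hτS.2]
    -- then V x = 0 and v x = 0
    have hVx : V x = 0 := by
      show (∫ s in (0:ℝ)..x, φ' (v s)) = 0
      have goal : (∫ s in (0:ℝ)..x, φ' (v s)) = 0 := by
        rw [intervalIntegral.integral_congr (g := fun _ => (0:ℝ)) ?_]
        · simp
        · intro s hs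
          rw [uIcc_of_le hx] at hs
          have : φ' (v s) ≤ φ' c := hφ'_mono (key s hs).le
          exact le_antisymm (hφc ▸ this) (hφ'_nonneg _)
      exact goal
    have := hVle x (right_mem_Icc.2 hx)
    rw [hVx] at this
    exact le_antisymm this (hv_nonneg x hx)
  · -- Case 2 : φ' is positive on positives
    push_neg at hc
    have hpos : ∀ c, 0 < c → 0 < φ' c := fun c h =>
      lt_of_le_of_ne (hφ'_nonneg c) (Ne.symm (hc c h))
    -- suffices V x = 0
    suffices hVx : V x ≤ 0 by
      exact le_antisymm (le_trans (hVle x (right_mem_Icc.2 hx)) hVx) (hv_nonneg x hx)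
    by_contra hVxpos'
    have hVxpos : 0 < V x := lt_of_not_ge hVxpos'
    -- t₀ : last zero of V
    set T : Set ℝ := {t ∈ Icc 0 x | V t = 0} with hTdef
    have hTne : T.Nonempty := ⟨0, left_mem_Icc.2 hx, hV0⟩
    have hTbd : BddAbove T := ⟨x, fun t ht => ht.1.2⟩
    set t₀ := sSup T with ht₀def
    have ht₀mem : t₀ ∈ Icc 0 x :=
      ⟨le_csSup hTbd ⟨left_mem_Icc.2 hx, hV0⟩, csSup_le hTne fun t ht => ht.1.2⟩
    have hVt₀ : V t₀ = 0 := by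
      have hle : ∀ ε, 0 < ε → V t₀ ≤ ε := by
        intro ε hε
        obtain ⟨t, htT, htlt⟩ := exists_lt_of_lt_csSup hTne
          (show t₀ - ε / (M + 1) < t₀ from sub_lt_self t₀ (by positivity))
        have htle : t ≤ t₀ := le_csSup hTbd htT
        have := hLip t t₀ htT.1 ht₀mem htle
        rw [htT.2] at this
        have hM1 : 0 < M + 1 := by linarith
        have h1 : t₀ - t ≤ ε / (M + 1) := by linarith
        calc V t₀ ≤ (t₀ - t) * M := by linarith
          _ ≤ (ε / (M + 1)) * M := by
              apply mul_le_mul_of_nonneg_right h1 hM0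
          _ ≤ ε := by
              rw [div_mul_eq_mul_div, div_le_iff₀ hM1]
              nlinarith
      have h0 : V t₀ ≤ 0 := le_of_forall_pos_le_add (by intro ε hε; simpa using hle ε hε)
      exact le_antisymm h0 (hVnonneg t₀ ht₀mem)
    have ht₀x : t₀ < x := by
      rcases lt_or_eq_of_le ht₀mem.2 with h | h
      · exact h
      · exfalso; rw [h] at hVt₀; linarith
    have hVpos : ∀ a, t₀ < a → a ≤ x → 0 < V a := by
      intro a ha hax
      have hamem : a ∈ Icc 0 x := ⟨le_trans ht₀mem.1 ha.le, hax⟩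
      rcases lt_or_eq_of_le (hVnonneg a hamem) with h | h
      · exact h
      · exfalso
        exact absurd (le_csSup hTbd ⟨hamem, h.symm⟩) (not_le.2 ha)
    -- the ENNReal integrand
    set g' : ℝ → ℝ≥0∞ := fun u => (ENNReal.ofReal (φ' u))⁻¹ with hg'def
    have hg'_meas : Measurable g' :=
      (ENNReal.measurable_ofReal.comp hφ'_meas).inv
    -- main estimate
    have main : ∀ a, t₀ < a → a ≤ x →
        ∫⁻ u in Ioc (V a) (V x), g' u ≤ ENNReal.ofReal (x - a) := by
      intro a ha hax
      have ha0 : 0 ≤ a := le_trans ht₀mem.1 ha.le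
      have hamem : a ∈ Icc 0 x := ⟨ha0, hax⟩
      have hVa : 0 < V a := hVpos a ha hax
      set cφ : ℝ := φ' (V a) with hcφ
      have hcφpos : 0 < cφ := hpos _ hVa
      have hφVx : cφ ≤ φ' (V x) :=
        hφ'_mono (hVmono a x hamem (right_mem_Icc.2 hx) hax)
      have bound : ∀ n : ℕ, 0 < n →
          ∫⁻ u in Ioc (V a) (V x), g' u ≤
            ENNReal.ofReal ((x - a) + ((x - a)/n) * (φ' (V x) - cφ) / cφ) := by
        intro n hn
        have hncast : (0:ℝ) < n := Nat.cast_pos.2 hn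
        set Δ : ℝ := (x - a)/n with hΔ
        have hΔ0 : 0 ≤ Δ := div_nonneg (by linarith) hncast.le
        set pt : ℕ → ℝ := fun i => a + i * Δ with hpt
        have hpt0 : pt 0 = a := by simp [hpt]
        have hptn : pt n = x := by
          simp only [hpt, hΔ]
          field_simp
          ring
        have hptstep : ∀ i : ℕ, pt i ≤ pt (i+1) := by
          intro i
          simp only [hpt, Nat.cast_add, Nat.cast_one]
          nlinarith [hΔ0]
        have hptmono : Monotone pt := monotone_nat_of_le_succ hptstep
        have hptmem : ∀ i : ℕ, i ≤ n → pt i ∈ Icc 0 x := by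
          intro i hi
          constructor
          · have h1 : 0 ≤ (i:ℝ) * Δ := mul_nonneg (Nat.cast_nonneg i) hΔ0
            simp only [hpt]; linarith
          · have h1 : (i:ℝ) * Δ ≤ n * Δ :=
              mul_le_mul_of_nonneg_right (Nat.cast_le.2 hi) hΔ0
            have h2 : a + (n:ℝ) * Δ = x := by rw [← hptn]
            simp only [hpt]; linarith
        have hVptlb : ∀ i : ℕ, i ≤ n → V a ≤ V (pt i) := by
          intro i hi
          refine hVmono a (pt i) hamem (hptmem i hi) ?_
          rw [← hpt0]; exact hptmono (Nat.zero_le i)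
        have piece : ∀ i : ℕ, i < n →
            ∫⁻ u in Ioc (V (pt i)) (V (pt (i+1))), g' u ≤
              ENNReal.ofReal (Δ * φ' (V (pt (i+1))) / φ' (V (pt i))) := by
          intro i hi
          have hmi := hptmem i hi.le
          have hmi1 := hptmem (i+1) hi
          have hci : 0 < φ' (V (pt i)) :=
            lt_of_lt_of_le hcφpos (hφ'_mono (hVptlb i hi.le))
          have hb1 : ∀ u ∈ Ioc (V (pt i)) (V (pt (i+1))), g' u ≤
              (ENNReal.ofReal (φ' (V (pt i))))⁻¹ := by
            intro u hu
            simp only [hg'def]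
            exact ENNReal.inv_le_inv' (ENNReal.ofReal_le_ofReal (hφ'_mono hu.1.le))
          calc ∫⁻ u in Ioc (V (pt i)) (V (pt (i+1))), g' u
              ≤ ∫⁻ _ in Ioc (V (pt i)) (V (pt (i+1))), (ENNReal.ofReal (φ' (V (pt i))))⁻¹ :=
                setLIntegral_mono measurable_const hb1
            _ = (ENNReal.ofReal (φ' (V (pt i))))⁻¹ * volume (Ioc (V (pt i)) (V (pt (i+1)))) :=
                setLIntegral_const _ _
            _ = (ENNReal.ofReal (φ' (V (pt i))))⁻¹ *
                  ENNReal.ofReal (V (pt (i+1)) - V (pt i)) := by rw [Real.volume_Ioc]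
            _ ≤ (ENNReal.ofReal (φ' (V (pt i))))⁻¹ *
                  ENNReal.ofReal (Δ * φ' (V (pt (i+1)))) := by
                gcongr
                have := hstep (pt i) (pt (i+1)) hmi hmi1 (hptstep i)
                have hd : pt (i+1) - pt i = Δ := by
                  simp only [hpt, Nat.cast_add, Nat.cast_one]; ring
                rw [hd] at this
                exact this
            _ = ENNReal.ofReal (Δ * φ' (V (pt (i+1))) / φ' (V (pt i))) := by
                rw [ENNReal.ofReal_div_of_pos hci, div_eq_mul_inv, mul_comm]
        have cum : ∀ k : ℕ, k ≤ n →
            ∫⁻ u in Ioc (V a) (V (pt k)), g' u ≤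
              ∑ i ∈ Finset.range k,
                ENNReal.ofReal (Δ * φ' (V (pt (i+1))) / φ' (V (pt i))) := by
          intro k
          induction k with
          | zero =>
            intro _
            rw [hpt0]
            simp
          | succ k ih =>
            intro hk
            have hk' : k ≤ n := (Nat.le_succ k).trans hk
            have hVk : V (pt k) ≤ V (pt (k+1)) :=
              hVmono (pt k) (pt (k+1)) (hptmem k hk') (hptmem (k+1) hk) (hptstep k)
            have hsub : Ioc (V a) (V (pt (k+1))) ⊆
                Ioc (V a) (V (pt k)) ∪ Ioc (V (pt k)) (V (pt (k+1))) := by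
              rw [Ioc_union_Ioc_eq_Ioc (hVptlb k hk') hVk]
            calc ∫⁻ u in Ioc (V a) (V (pt (k+1))), g' u
                ≤ ∫⁻ u in Ioc (V a) (V (pt k)) ∪ Ioc (V (pt k)) (V (pt (k+1))), g' u :=
                  lintegral_mono_set hsub
              _ ≤ (∫⁻ u in Ioc (V a) (V (pt k)), g' u) +
                    ∫⁻ u in Ioc (V (pt k)) (V (pt (k+1))), g' u := lintegral_union_le _ _ _
              _ ≤ (∑ i ∈ Finset.range k,
                    ENNReal.ofReal (Δ * φ' (V (pt (i+1))) / φ' (V (pt i)))) +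
                    ENNReal.ofReal (Δ * φ' (V (pt (k+1))) / φ' (V (pt k))) :=
                  add_le_add (ih hk') (piece k (Nat.lt_of_succ_le hk))
              _ = ∑ i ∈ Finset.range (k+1),
                    ENNReal.ofReal (Δ * φ' (V (pt (i+1))) / φ' (V (pt i))) :=
                  (Finset.sum_range_succ _ k).symm
        have hterm_nonneg : ∀ i : ℕ, 0 ≤ Δ * φ' (V (pt (i+1))) / φ' (V (pt i)) :=
          fun i => div_nonneg (mul_nonneg hΔ0 (hφ'_nonneg _)) (hφ'_nonneg _)
        have hsum : ∑ i ∈ Finset.range n,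
            ENNReal.ofReal (Δ * φ' (V (pt (i+1))) / φ' (V (pt i)))
            = ENNReal.ofReal (∑ i ∈ Finset.range n,
                Δ * φ' (V (pt (i+1))) / φ' (V (pt i))) :=
          (ENNReal.ofReal_sum_of_nonneg fun i _ => hterm_nonneg i).symm
        have hreal : ∑ i ∈ Finset.range n, Δ * φ' (V (pt (i+1))) / φ' (V (pt i))
            ≤ (x - a) + Δ * (φ' (V x) - cφ) / cφ := by
          have hterm : ∀ i ∈ Finset.range n,
              Δ * φ' (V (pt (i+1))) / φ' (V (pt i))
              ≤ Δ + Δ * (φ' (V (pt (i+1))) - φ' (V (pt i))) / cφ := by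
            intro i hi
            have hilt := Finset.mem_range.1 hi
            have hci : cφ ≤ φ' (V (pt i)) := hφ'_mono (hVptlb i hilt.le)
            have hcipos : 0 < φ' (V (pt i)) := lt_of_lt_of_le hcφpos hci
            have hmonoφ : φ' (V (pt i)) ≤ φ' (V (pt (i+1))) :=
              hφ'_mono (hVmono (pt i) (pt (i+1)) (hptmem i hilt.le)
                (hptmem (i+1) hilt) (hptstep i))
            have key : Δ * φ' (V (pt (i+1))) / φ' (V (pt i))
                = Δ + Δ * (φ' (V (pt (i+1))) - φ' (V (pt i))) / φ' (V (pt i)) := by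
              field_simp
              ring
            have h2 : Δ * (φ' (V (pt (i+1))) - φ' (V (pt i))) / φ' (V (pt i))
                ≤ Δ * (φ' (V (pt (i+1))) - φ' (V (pt i))) / cφ := by
              apply div_le_div_of_nonneg_left (mul_nonneg hΔ0 (by linarith)) hcφpos hci
            linarith [key, h2]
          calc ∑ i ∈ Finset.range n, Δ * φ' (V (pt (i+1))) / φ' (V (pt i))
              ≤ ∑ i ∈ Finset.range n,
                  (Δ + Δ * (φ' (V (pt (i+1))) - φ' (V (pt i))) / cφ) :=
                Finset.sum_le_sum hterm
            _ = n * Δ + (Δ / cφ) * ∑ i ∈ Finset.range n,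
                  (φ' (V (pt (i+1))) - φ' (V (pt i))) := by
                rw [Finset.sum_add_distrib, Finset.sum_const, Finset.card_range,
                  Finset.mul_sum]
                congr 1
                · simp [nsmul_eq_mul]
                · refine Finset.sum_congr rfl fun i _ => ?_
                  ring
            _ = n * Δ + (Δ / cφ) * (φ' (V (pt n)) - φ' (V (pt 0))) := by
                rw [Finset.sum_range_sub (fun i => φ' (V (pt i))) n]
            _ = (x - a) + Δ * (φ' (V x) - cφ) / cφ := by
                rw [hptn, hpt0, ← hcφ]
                have hnΔ : (n:ℝ) * Δ = x - a := by
                  rw [hΔ]; field_simp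
                rw [hnΔ]
                ring
        calc ∫⁻ u in Ioc (V a) (V x), g' u
            = ∫⁻ u in Ioc (V a) (V (pt n)), g' u := by rw [hptn]
          _ ≤ ∑ i ∈ Finset.range n,
                ENNReal.ofReal (Δ * φ' (V (pt (i+1))) / φ' (V (pt i))) := cum n le_rfl
          _ = ENNReal.ofReal (∑ i ∈ Finset.range n,
                Δ * φ' (V (pt (i+1))) / φ' (V (pt i))) := hsum
          _ ≤ ENNReal.ofReal ((x - a) + ((x - a)/n) * (φ' (V x) - cφ) / cφ) := by
              exact ENNReal.ofReal_le_ofReal (by rw [← hΔ]; exact hreal)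
      refine ENNReal.le_of_forall_pos_le_add fun ε hε _ => ?_
      have hεR : (0:ℝ) < (ε:ℝ) := hε
      obtain ⟨n, hn⟩ := exists_nat_ge ((x - a) * (φ' (V x) - cφ) / cφ / (ε:ℝ))
      set m : ℕ := max n 1 with hm
      have hm1 : 0 < m := lt_of_lt_of_le Nat.one_pos (le_max_right n 1)
      have hmcast : (0:ℝ) < m := Nat.cast_pos.2 hm1
      have hKm : (x - a) * (φ' (V x) - cφ) / cφ ≤ m * (ε:ℝ) := by
        have hnm : (n:ℝ) ≤ m := Nat.cast_le.2 (le_max_left n 1)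
        have := (div_le_iff₀ hεR).1 (le_trans hn hnm)
        linarith [this]
      have hsm : ((x - a)/m) * (φ' (V x) - cφ) / cφ ≤ (ε:ℝ) := by
        rw [div_le_iff₀ hεR] at hn
        have h1 : ((x - a)/m) * (φ' (V x) - cφ) / cφ
            = ((x - a) * (φ' (V x) - cφ) / cφ) / m := by ring
        rw [h1, div_le_iff₀ hmcast]
        calc (x - a) * (φ' (V x) - cφ) / cφ ≤ m * (ε:ℝ) := hKm
          _ = (ε:ℝ) * m := by ring
      calc ∫⁻ u in Ioc (V a) (V x), g' u
          ≤ ENNReal.ofReal ((x - a) + ((x - a)/m) * (φ' (V x) - cφ) / cφ) := bound m hm1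
        _ ≤ ENNReal.ofReal (x - a) + ENNReal.ofReal (((x - a)/m) * (φ' (V x) - cφ) / cφ) :=
            ENNReal.ofReal_add_le
        _ ≤ ENNReal.ofReal (x - a) + (ε:ℝ≥0∞) := by
            gcongr
            calc ENNReal.ofReal (((x - a)/m) * (φ' (V x) - cφ) / cφ)
                ≤ ENNReal.ofReal (ε:ℝ) := ENNReal.ofReal_le_ofReal hsm
              _ = (ε:ℝ≥0∞) := ENNReal.ofReal_coe_nnreal
    -- monotone convergence: integral over (0, V x] is ≤ x
    have hfin : ∫⁻ u in Ioc (0:ℝ) (V x), g' u ≤ ENNReal.ofReal x := by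
      set c : ℕ → ℝ := fun n => V x / (n + 2) with hcdef
      have hcpos : ∀ n, 0 < c n := fun n => div_pos hVxpos (by positivity)
      have hM1 : (0:ℝ) < M + 1 := by linarith
      have hf : ∀ n : ℕ, ∫⁻ u in Ioc (c n) (V x), g' u ≤ ENNReal.ofReal x := by
        intro n
        set a : ℝ := min x (t₀ + c n / (M + 1)) with hadef
        have hat : t₀ < a := lt_min ht₀x (by linarith [div_pos (hcpos n) hM1])
        have hax : a ≤ x := min_le_left _ _
        have hamem : a ∈ Icc 0 x := ⟨le_trans ht₀mem.1 hat.le, hax⟩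
        have hVa_lt : V a < c n := by
          have h1 : V a - V t₀ ≤ (a - t₀) * M := hLip t₀ a ht₀mem hamem hat.le
          have h2 : a - t₀ ≤ c n / (M + 1) := by
            have : a ≤ t₀ + c n / (M + 1) := min_le_right _ _
            linarith
          have h3 : V a ≤ (c n / (M + 1)) * M := by
            rw [hVt₀] at h1
            nlinarith [hM0]
          have h4 : (c n / (M + 1)) * M < c n := by
            rw [div_mul_eq_mul_div, div_lt_iff₀ hM1]
            nlinarith [hcpos n]
          linarith
        calc ∫⁻ u in Ioc (c n) (V x), g' u
            ≤ ∫⁻ u in Ioc (V a) (V x), g' u :=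
              lintegral_mono_set (Ioc_subset_Ioc_left hVa_lt.le)
          _ ≤ ENNReal.ofReal (x - a) := main a hat hax
          _ ≤ ENNReal.ofReal x := ENNReal.ofReal_le_ofReal (by linarith [hamem.1])
      have hcmono : ∀ ⦃p q : ℕ⦄, p ≤ q → c q ≤ c p := by
        intro p q hpq
        apply div_le_div_of_nonneg_left hVxpos.le (by positivity)
        have : (p:ℝ) ≤ q := Nat.cast_le.2 hpq
        linarith
      set f : ℕ → ℝ → ℝ≥0∞ := fun n => (Ioc (c n) (V x)).indicator g' with hfdef
      have hfm : ∀ n, Measurable (f n) := fun n => hg'_meas.indicator measurableSet_Ioc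
      have hfmono : Monotone f := fun p q hpq =>
        indicator_le_indicator_of_subset (Ioc_subset_Ioc_left (hcmono hpq)) (fun _ => zero_le)
      have hsup : ∀ u, ⨆ n, f n u = (Ioc (0:ℝ) (V x)).indicator g' u := by
        intro u
        by_cases hu : u ∈ Ioc (0:ℝ) (V x)
        · rw [indicator_of_mem hu]
          refine le_antisymm (iSup_le fun k => Set.indicator_le_self _ _ u) ?_
          obtain ⟨n, hn⟩ := exists_nat_gt (V x / u)
          have hcu : c n < u := by
            rw [hcdef]
            rw [div_lt_iff₀ (by positivity)]
            have h1 : V x < n * u := by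
              have := (div_lt_iff₀ hu.1).1 hn
              linarith
            nlinarith [hu.1]
          have hmem : u ∈ Ioc (c n) (V x) := ⟨hcu, hu.2⟩
          calc g' u = f n u := (indicator_of_mem hmem g').symm
            _ ≤ ⨆ k, f k u := le_iSup (fun k => f k u) n
        · rw [indicator_of_notMem hu]
          refine le_antisymm (iSup_le fun k => ?_) zero_le
          have : u ∉ Ioc (c k) (V x) := by
            intro hmem
            exact hu ⟨lt_trans (hcpos k) hmem.1, hmem.2⟩
          rw [hfdef]
          simp [indicator_of_notMem this]
      calc ∫⁻ u in Ioc (0:ℝ) (V x), g' u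
          = ∫⁻ u, (Ioc (0:ℝ) (V x)).indicator g' u := (lintegral_indicator measurableSet_Ioc g').symm
        _ = ∫⁻ u, ⨆ n, f n u := by simp_rw [hsup]
        _ = ⨆ n, ∫⁻ u, f n u := lintegral_iSup hfm hfmono
        _ = ⨆ n, ∫⁻ u in Ioc (c n) (V x), g' u := by
            refine iSup_congr fun n => ?_
            rw [hfdef]
            exact lintegral_indicator measurableSet_Ioc g'
        _ ≤ ENNReal.ofReal x := iSup_le hf
    -- divergence: integral over (0, V x] is ⊤
    have htop : ∫⁻ u in Ioc (0:ℝ) (V x), g' u = ⊤ := by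
      rcases le_or_gt 1 (V x) with h | h
      · have hmono := lintegral_mono_set (μ := volume) (f := g')
          (Ioc_subset_Ioc_right h : Ioc (0:ℝ) 1 ⊆ Ioc 0 (V x))
        rw [hdiv'] at hmono
        exact top_le_iff.1 hmono
      · have h2 : ∫⁻ u in Ioc (V x) 1, g' u < ⊤ := by
          have hφVx : 0 < φ' (V x) := hpos _ hVxpos
          have hb : ∀ u ∈ Ioc (V x) 1, g' u ≤ (ENNReal.ofReal (φ' (V x)))⁻¹ := by
            intro u hu
            simp only [hg'def]
            exact ENNReal.inv_le_inv' (ENNReal.ofReal_le_ofReal (hφ'_mono hu.1.le))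
          calc ∫⁻ u in Ioc (V x) 1, g' u
              ≤ ∫⁻ _ in Ioc (V x) 1, (ENNReal.ofReal (φ' (V x)))⁻¹ :=
                setLIntegral_mono measurable_const hb
            _ = (ENNReal.ofReal (φ' (V x)))⁻¹ * volume (Ioc (V x) 1) := setLIntegral_const _ _
            _ < ⊤ := ENNReal.mul_lt_top
                (ENNReal.inv_lt_top.2 (ENNReal.ofReal_pos.2 hφVx)) measure_Ioc_lt_top
        have hsplit : (⊤:ℝ≥0∞) ≤ (∫⁻ u in Ioc (0:ℝ) (V x), g' u) + ∫⁻ u in Ioc (V x) 1, g' u := by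
          rw [← hdiv']
          calc ∫⁻ u in Ioc (0:ℝ) 1, g' u
              ≤ ∫⁻ u in Ioc (0:ℝ) (V x) ∪ Ioc (V x) 1, g' u := by
                refine lintegral_mono_set ?_
                rw [Ioc_union_Ioc_eq_Ioc hVxpos.le h.le]
            _ ≤ (∫⁻ u in Ioc (0:ℝ) (V x), g' u) + ∫⁻ u in Ioc (V x) 1, g' u :=
                lintegral_union_le _ _ _
        by_contra hne
        have hlt : ∫⁻ u in Ioc (0:ℝ) (V x), g' u < ⊤ := lt_top_iff_ne_top.2 hne
        exact absurd (lt_of_le_of_lt hsplit (ENNReal.add_lt_top.2 ⟨hlt, h2⟩)) (lt_irrefl ⊤)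
    rw [htop] at hfin
    exact absurd (lt_of_le_of_lt hfin ENNReal.ofReal_lt_top) (lt_irrefl ⊤)
end

section
/- Let ρ : [0,∞) → [0,∞) be a modulus of continuity with ρ(s) > 0 for s > 0 and ∫₀¹ ds/ρ(s) = +∞, and let C₁, C₂ > 0. If v : [0,∞) → ℝ is continuous and satisfies 0 ≤ v(x) ≤ ∫₀ˣ (C₁ ρ(v(s)) + C₂ v(s)) ds for every x ≥ 0, then v(x) = 0 for every x ≥ 0. -/
open MeasureTheory Set

lemma div_aux (g : ℝ → ℝ) (hg_cont : Continuous g) (hg_pos : ∀ s, 0 < s → 0 < g s)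
    (c : ℝ) (hc : 0 < c) (hc1 : c ≤ 1)
    (hg_mono : Monotone g)
    (hdiv : ∫⁻ s in Ioc (0:ℝ) 1, (ENNReal.ofReal (g s))⁻¹ ∂volume = ⊤) :
    ∀ M : ℝ, ∃ a, 0 < a ∧ a < c ∧ M ≤ ∫ s in a..c, (g s)⁻¹ := by
  intro M
  -- Step 1: the lintegral over Ioc 0 c is ⊤
  have hmeas : Measurable fun s : ℝ => (ENNReal.ofReal (g s))⁻¹ :=
    (ENNReal.measurable_ofReal.comp hg_cont.measurable).inv
  have hsplit : Ioc (0:ℝ) 1 = Ioc 0 c ∪ Ioc c 1 := (Ioc_union_Ioc_eq_Ioc hc.le hc1).symm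
  have htail : ∫⁻ s in Ioc c 1, (ENNReal.ofReal (g s))⁻¹ ∂volume < ⊤ := by
    calc ∫⁻ s in Ioc c 1, (ENNReal.ofReal (g s))⁻¹ ∂volume
        ≤ ∫⁻ _ in Ioc c 1, (ENNReal.ofReal (g c))⁻¹ ∂volume := by
          refine setLIntegral_mono' measurableSet_Ioc ?_
          intro s hs
          exact ENNReal.inv_le_inv.mpr (ENNReal.ofReal_le_ofReal (hg_mono hs.1.le))
      _ = (ENNReal.ofReal (g c))⁻¹ * volume (Ioc c 1) := by
          rw [setLIntegral_const]
      _ < ⊤ := by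
          apply ENNReal.mul_lt_top
          · simp [ENNReal.inv_lt_top, ENNReal.ofReal_pos.mpr (hg_pos c hc)]
          · simp [Real.volume_Ioc]
  have hIoc0c : ∫⁻ s in Ioc (0:ℝ) c, (ENNReal.ofReal (g s))⁻¹ ∂volume = ⊤ := by
    by_contra h
    have hd : Disjoint (Ioc (0:ℝ) c) (Ioc c 1) := Ioc_disjoint_Ioc_of_le le_rfl
    rw [hsplit, lintegral_union measurableSet_Ioc hd] at hdiv
    exact (ENNReal.add_lt_top.mpr ⟨lt_top_iff_ne_top.mpr h, htail⟩).ne hdiv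
  -- Step 2: monotone convergence to find a
  set F : ℝ → ENNReal := fun s => (ENNReal.ofReal (g s))⁻¹ with hF
  set f : ℕ → ℝ → ENNReal := fun n => (Ioc (c / (n + 2)) c).indicator F with hf
  have hfmono : Monotone f := by
    intro m n hmn
    apply indicator_le_indicator_of_subset
    · apply Ioc_subset_Ioc_left
      apply div_le_div_of_nonneg_left hc.le
      · positivity
      · have : (m:ℝ) ≤ n := Nat.cast_le.mpr hmn
        linarith
    · intro x; exact zero_le
  have hfsup : ∀ s, (⨆ n, f n s) = (Ioc (0:ℝ) c).indicator F s := by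
    intro s
    by_cases hs : s ∈ Ioc (0:ℝ) c
    · rw [indicator_of_mem hs]
      apply le_antisymm
      · exact iSup_le fun n => (indicator_le_indicator_of_subset
          (Ioc_subset_Ioc_left (by positivity)) (fun x => zero_le) s).trans
          (le_of_eq (indicator_of_mem hs F))
      · obtain ⟨n, hn⟩ := exists_nat_gt (c / s)
        refine le_iSup_of_le n (le_of_eq ?_)
        rw [show f n s = (Ioc (c / (↑n + 2)) c).indicator F s from rfl, indicator_of_mem]
        constructor
        · rw [div_lt_iff₀ hs.1] at hn
          rw [div_lt_iff₀ (by positivity : (0:ℝ) < (n:ℝ) + 2)]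
          nlinarith [hs.1]
        · exact hs.2
    · rw [indicator_of_notMem hs]
      simp only [ENNReal.iSup_eq_zero]
      intro n
      apply indicator_of_notMem
      intro hmem
      exact hs ⟨lt_trans (by positivity) hmem.1, hmem.2⟩
  have hsup : (⨆ n, ∫⁻ s, f n s ∂(volume.restrict (Ioc (0:ℝ) c))) = ⊤ := by
    rw [← lintegral_iSup (fun n => (hmeas.indicator measurableSet_Ioc)) hfmono]
    have : ∀ᵐ s ∂(volume.restrict (Ioc (0:ℝ) c)), (⨆ n, f n s) = F s := by
      filter_upwards [ae_restrict_mem measurableSet_Ioc] with s hs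
      rw [hfsup s, indicator_of_mem hs]
    rw [lintegral_congr_ae this]
    exact hIoc0c
  -- pick n with large lintegral
  have hlt : ENNReal.ofReal (max M 0) < ⨆ n, ∫⁻ s, f n s ∂(volume.restrict (Ioc (0:ℝ) c)) := by
    rw [hsup]; exact ENNReal.ofReal_lt_top
  obtain ⟨n, hn⟩ := lt_iSup_iff.mp hlt
  set a := c / (n + 2) with ha
  have ha_pos : 0 < a := by positivity
  have ha_lt : a < c := by
    rw [ha, div_lt_iff₀ (by positivity : (0:ℝ) < (n:ℝ) + 2)]
    nlinarith
  refine ⟨a, ha_pos, ha_lt, ?_⟩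
  have hsub : Ioc a c ⊆ Ioc (0:ℝ) c := Ioc_subset_Ioc_left ha_pos.le
  have h1 : ∫⁻ s, f n s ∂(volume.restrict (Ioc (0:ℝ) c)) = ∫⁻ s in Ioc a c, F s ∂volume := by
    rw [hf, lintegral_indicator measurableSet_Ioc, Measure.restrict_restrict measurableSet_Ioc,
      inter_eq_self_of_subset_left hsub]
  have hgc : ContinuousOn (fun s : ℝ => (g s)⁻¹) (Icc a c) := by
    apply ContinuousOn.inv₀ hg_cont.continuousOn
    intro x hx
    exact (hg_pos x (lt_of_lt_of_le ha_pos hx.1)).ne'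
  have hInt : IntegrableOn (fun s : ℝ => (g s)⁻¹) (Ioc a c) volume :=
    (hgc.integrableOn_compact isCompact_Icc).mono_set Ioc_subset_Icc_self
  have h2 : ∫⁻ s in Ioc a c, F s ∂volume
      = ENNReal.ofReal (∫ s in Ioc a c, (g s)⁻¹ ∂volume) := by
    rw [MeasureTheory.ofReal_integral_eq_lintegral_ofReal hInt ?_]
    · apply setLIntegral_congr_fun measurableSet_Ioc
      intro s hs
      rw [hF]
      exact (ENNReal.ofReal_inv_of_pos (hg_pos s (lt_trans ha_pos hs.1))).symm
    · filter_upwards [ae_restrict_mem measurableSet_Ioc] with s hs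
      exact inv_nonneg.mpr (hg_pos s (lt_trans ha_pos hs.1)).le
  rw [h1, h2] at hn
  have hpos : 0 < ∫ s in Ioc a c, (g s)⁻¹ ∂volume := by
    by_contra h
    push_neg at h
    rw [ENNReal.ofReal_eq_zero.mpr h] at hn
    exact (not_lt.mpr zero_le) hn
  have hMlt : max M 0 < ∫ s in Ioc a c, (g s)⁻¹ ∂volume :=
    (ENNReal.ofReal_lt_ofReal_iff hpos).mp hn
  rw [intervalIntegral.integral_of_le ha_lt.le]
  exact le_trans (le_max_left M 0) hMlt.le



/-- Grönwall–Bihari estimate with a perturbed modulus: if `ρ` is a modulus of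
continuity (continuous, nondecreasing, concave, `ρ 0 = 0`, nonnegative) with
`ρ(s) > 0` for `s > 0` and `∫₀¹ ds/ρ(s) = +∞`, and `C₁, C₂ > 0`, then any
continuous `v ≥ 0` with `v x ≤ ∫₀ˣ (C₁ ρ(v s) + C₂ v s) ds` for all `x ≥ 0`
vanishes identically on `[0,∞)`. -/
theorem gronwall_bihari_perturbed_modulus
    (ρ : ℝ → ℝ)
    (hρ_cont : ContinuousOn ρ (Ici 0))
    (hρ_mono : MonotoneOn ρ (Ici 0))
    (hρ_conc : ConcaveOn ℝ (Ici 0) ρ)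
    (hρ0 : ρ 0 = 0)
    (hρ_nonneg : ∀ s, 0 ≤ s → 0 ≤ ρ s)
    (hρ_pos : ∀ s, 0 < s → 0 < ρ s)
    (hρ_div : ∫⁻ s in Ioc (0:ℝ) 1, (ENNReal.ofReal (ρ s))⁻¹ ∂volume = ⊤)
    (C₁ C₂ : ℝ) (hC₁ : 0 < C₁) (hC₂ : 0 < C₂)
    (v : ℝ → ℝ) (hv_cont : Continuous v)
    (hv_nonneg : ∀ x, 0 ≤ x → 0 ≤ v x)
    (hv_le : ∀ x, 0 ≤ x → v x ≤ ∫ s in (0:ℝ)..x, (C₁ * ρ (v s) + C₂ * v s)) :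
    ∀ x, 0 ≤ x → v x = 0 := by
  -- extended modulus
  set r : ℝ → ℝ := fun s => ρ (max s 0) with hr_def
  have hr_eq : ∀ s, 0 ≤ s → r s = ρ s := fun s hs => by
    simp only [hr_def, max_eq_left hs]
  have hr_cont : Continuous r :=
    hρ_cont.comp_continuous (continuous_id.max continuous_const)
      (fun x => mem_Ici.mpr (le_max_right _ _))
  have hr_nonneg : ∀ s, 0 ≤ r s := fun s => hρ_nonneg _ (le_max_right _ _)
  have hr_mono : Monotone r := fun s t hst =>
    hρ_mono (mem_Ici.mpr (le_max_right _ _)) (mem_Ici.mpr (le_max_right _ _)) (max_le_max hst le_rfl)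
  have hr_pos : ∀ s, 0 < s → 0 < r s := fun s hs => by
    rw [hr_eq s hs.le]; exact hρ_pos s hs
  -- the RHS function and its integral
  set f : ℝ → ℝ := fun s => C₁ * r (v s) + C₂ * v s with hf_def
  have hf_cont : Continuous f := by
    exact ((continuous_const.mul (hr_cont.comp hv_cont)).add (continuous_const.mul hv_cont))
  set w : ℝ → ℝ := fun x => ∫ s in (0:ℝ)..x, f s with hw_def
  have hw_deriv : ∀ x, HasDerivAt w (f x) x := fun x =>
    intervalIntegral.integral_hasDerivAt_right (hf_cont.intervalIntegrable 0 x)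
      (hf_cont.stronglyMeasurableAtFilter volume (nhds x)) hf_cont.continuousAt
  have hw_cont : Continuous w :=
    continuous_iff_continuousAt.mpr fun x => (hw_deriv x).continuousAt
  have hv_le' : ∀ x, 0 ≤ x → v x ≤ w x := by
    intro x hx
    refine (hv_le x hx).trans_eq ?_
    apply intervalIntegral.integral_congr
    intro s hs
    rw [uIcc_of_le hx] at hs
    rw [hf_def]
    simp only
    rw [hr_eq _ (hv_nonneg s hs.1)]
  have hf_nonneg : ∀ s, 0 ≤ s → 0 ≤ f s := fun s hs => by
    have := hv_nonneg s hs
    have := hr_nonneg (v s)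
    positivity
  have hw_mono : ∀ x y, 0 ≤ x → x ≤ y → w x ≤ w y := by
    intro x y hx hxy
    have : w y - w x = ∫ s in x..y, f s := by
      rw [hw_def]
      simp only
      rw [← intervalIntegral.integral_interval_sub_left (hf_cont.intervalIntegrable 0 y)
        (hf_cont.intervalIntegrable 0 x)]
    have hnn : 0 ≤ ∫ s in x..y, f s :=
      intervalIntegral.integral_nonneg hxy (fun u hu => hf_nonneg u (hx.trans hu.1))
    linarith
  have hw0 : w 0 = 0 := intervalIntegral.integral_same
  have hw_nonneg : ∀ x, 0 ≤ x → 0 ≤ w x := fun x hx => hw0 ▸ hw_mono 0 x le_rfl hx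
  -- suppose v x₀ > 0
  intro x₀ hx₀
  by_contra hne
  have hv_pos : 0 < v x₀ := lt_of_le_of_ne (hv_nonneg x₀ hx₀) (Ne.symm hne)
  have hc_pos : 0 < w x₀ := hv_pos.trans_le (hv_le' x₀ hx₀)
  set c : ℝ := w x₀ with hc_def
  -- the last zero of w before x₀
  set S : Set ℝ := {y | y ∈ Icc 0 x₀ ∧ w y = 0} with hS_def
  have hS0 : (0:ℝ) ∈ S := ⟨⟨le_rfl, hx₀⟩, hw0⟩
  have hS_closed : IsClosed S := by
    have : S = Icc 0 x₀ ∩ w ⁻¹' {0} := rfl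
    rw [this]
    exact isClosed_Icc.inter (isClosed_singleton.preimage hw_cont)
  have hS_bdd : BddAbove S := ⟨x₀, fun y hy => hy.1.2⟩
  set b : ℝ := sSup S with hb_def
  have hbS : b ∈ S := hS_closed.csSup_mem ⟨0, hS0⟩ hS_bdd
  have hb_nonneg : 0 ≤ b := hbS.1.1
  have hb_lt : b < x₀ := lt_of_le_of_ne hbS.1.2 (fun h => by
    rw [h] at hbS; exact hc_pos.ne' hbS.2)
  have hw_pos : ∀ y, b < y → y ≤ x₀ → 0 < w y := by
    intro y hy hy'
    rcases lt_or_eq_of_le (hw_nonneg y (hb_nonneg.trans hy.le)) with h | h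
    · exact h
    · exact absurd (le_csSup hS_bdd ⟨⟨hb_nonneg.trans hy.le, hy'⟩, h.symm⟩) (not_le.mpr hy)
  -- the function ψ and F
  set φ : ℝ → ℝ := fun u => C₁ * r u + C₂ * u with hφ_def
  have hφ_cont : Continuous φ := (continuous_const.mul hr_cont).add (continuous_const.mul continuous_id)
  have hφ_pos : ∀ u, 0 < u → 0 < φ u := fun u hu => by
    have := hr_pos u hu; rw [hφ_def]; simp only; positivity
  set ψ : ℝ → ℝ := fun u => (φ u)⁻¹ with hψ_def
  have hψ_contOn : ContinuousOn ψ (Ioi 0) :=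
    hφ_cont.continuousOn.inv₀ fun u hu => (hφ_pos u hu).ne'
  have hψ_nonneg : ∀ u, 0 < u → 0 ≤ ψ u := fun u hu => inv_nonneg.mpr (hφ_pos u hu).le
  have hψ_intble : ∀ y z : ℝ, 0 < y → 0 < z → IntervalIntegrable ψ volume y z := by
    intro y z hy hz
    apply ContinuousOn.intervalIntegrable
    apply hψ_contOn.mono
    intro u hu
    exact lt_of_lt_of_le (lt_min hy hz) hu.1
  set F : ℝ → ℝ := fun y => ∫ u in y..c, ψ u with hF_def
  have hF_deriv : ∀ y, 0 < y → HasDerivAt F (-ψ y) y := by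
    intro y hy
    exact intervalIntegral.integral_hasDerivAt_left (hψ_intble y c hy hc_pos)
      (hψ_contOn.stronglyMeasurableAtFilter isOpen_Ioi y hy)
      (hψ_contOn.continuousAt (isOpen_Ioi.mem_nhds hy))
  -- the key monotonicity claim
  have claim : ∀ x₁, b < x₁ → x₁ ≤ x₀ → F (w x₁) + x₁ ≤ x₀ := by
    intro x₁ hx₁ hx₁'
    set g : ℝ → ℝ := fun x => F (w x) + x with hg_def
    have hg_deriv : ∀ x, b < x → x ≤ x₀ → HasDerivAt g (-ψ (w x) * f x + 1) x := by
      intro x hx hx'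
      exact ((hF_deriv (w x) (hw_pos x hx hx')).comp x (hw_deriv x)).add (hasDerivAt_id x)
    have hg_mono : MonotoneOn g (Icc x₁ x₀) := by
      apply monotoneOn_of_deriv_nonneg (convex_Icc x₁ x₀)
      · intro x hx
        exact ((hg_deriv x (hx₁.trans_le hx.1) hx.2).continuousAt).continuousWithinAt
      · intro x hx
        rw [interior_Icc] at hx
        exact (hg_deriv x (hx₁.trans_le hx.1.le) hx.2.le).differentiableAt.differentiableWithinAt
      · intro x hx
        rw [interior_Icc] at hx
        have hd := hg_deriv x (hx₁.trans_le hx.1.le) hx.2.le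
        rw [hd.deriv]
        -- show 0 ≤ -ψ (w x) * f x + 1, i.e. ψ (w x) * f x ≤ 1
        have hwx : 0 < w x := hw_pos x (hx₁.trans hx.1) hx.2.le
        have hx_nonneg : (0:ℝ) ≤ x := hb_nonneg.trans (hx₁.trans hx.1).le
        have hvx : 0 ≤ v x := hv_nonneg x hx_nonneg
        have hvw : v x ≤ w x := hv_le' x hx_nonneg
        have hfle : f x ≤ φ (w x) := by
          rw [hf_def, hφ_def]
          simp only
          have h1 : r (v x) ≤ r (w x) := hr_mono hvw
          nlinarith
        have hφwx : 0 < φ (w x) := hφ_pos _ hwx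
        have : ψ (w x) * f x ≤ 1 := by
          rw [hψ_def]
          simp only
          rw [inv_mul_le_iff₀ hφwx, mul_one]
          exact hfle
        nlinarith
    have := hg_mono ⟨le_rfl, hx₁'⟩ ⟨hx₁', le_rfl⟩ hx₁'
    rw [hg_def] at this
    simp only at this
    have hFc : F c = 0 := intervalIntegral.integral_same
    have h2 : F (w x₁) + x₁ ≤ F c + x₀ := this
    linarith
  -- final contradiction via divergence
  set c' : ℝ := min c 1 with hc'_def
  have hc'_pos : 0 < c' := lt_min hc_pos one_pos
  have hc'_le1 : c' ≤ 1 := min_le_right _ _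
  have hc'_le : c' ≤ c := min_le_left _ _
  have hρ1 : 0 < ρ 1 := hρ_pos 1 one_pos
  set K : ℝ := C₁ + C₂ / ρ 1 with hK_def
  have hK_pos : 0 < K := by positivity
  have hr_div : ∫⁻ s in Ioc (0:ℝ) 1, (ENNReal.ofReal (r s))⁻¹ ∂volume = ⊤ := by
    rw [← hρ_div]
    apply setLIntegral_congr_fun measurableSet_Ioc
    intro s hs; beta_reduce
    rw [hr_eq s hs.1.le]
  obtain ⟨a, ha_pos, ha_lt, ha_ge⟩ :=
    div_aux r hr_cont hr_pos c' hc'_pos hc'_le1 hr_mono hr_div (K * (x₀ + 1))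
  -- concavity bound : s * ρ 1 ≤ ρ s on [0,1]
  have hconc : ∀ s, 0 ≤ s → s ≤ 1 → s * ρ 1 ≤ ρ s := by
    intro s hs hs1
    have h := hρ_conc.2 (mem_Ici.mpr zero_le_one) (mem_Ici.mpr le_rfl)
      hs (by linarith : (0:ℝ) ≤ 1 - s) (by ring)
    simp only [smul_eq_mul, mul_one, mul_zero, hρ0, add_zero] at h
    linarith
  have hψ_ge : ∀ s, s ∈ Icc a c' → K⁻¹ * (r s)⁻¹ ≤ ψ s := by
    intro s hs
    have hs_pos : 0 < s := ha_pos.trans_le hs.1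
    have hs1 : s ≤ 1 := hs.2.trans hc'_le1
    have hrq : r s = ρ s := hr_eq s hs_pos.le
    have hrs : 0 < r s := hr_pos s hs_pos
    have hcs : s * ρ 1 ≤ ρ s := hconc s hs_pos.le hs1
    have hφle : φ s ≤ K * r s := by
      rw [hφ_def, hK_def]
      simp only
      have h2 : C₂ * s ≤ C₂ / ρ 1 * r s := by
        rw [hrq, div_mul_eq_mul_div, le_div_iff₀ hρ1]
        nlinarith
      nlinarith
    rw [hψ_def]
    simp only
    rw [← mul_inv]
    exact inv_anti₀ (hφ_pos s hs_pos) hφle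
  have hrinv_contOn : ContinuousOn (fun s : ℝ => K⁻¹ * (r s)⁻¹) (Icc a c') := by
    apply continuousOn_const.mul
    apply hr_cont.continuousOn.inv₀
    intro s hs
    exact (hr_pos s (ha_pos.trans_le hs.1)).ne'
  have hr_intble : IntervalIntegrable (fun s : ℝ => K⁻¹ * (r s)⁻¹) volume a c' := by
    apply ContinuousOn.intervalIntegrable
    rwa [uIcc_of_le ha_lt.le]
  have hint_ge : x₀ + 1 ≤ ∫ s in a..c', ψ s := by
    have h1 : (∫ s in a..c', K⁻¹ * (r s)⁻¹) ≤ ∫ s in a..c', ψ s :=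
      intervalIntegral.integral_mono_on ha_lt.le hr_intble
        (hψ_intble a c' ha_pos hc'_pos) hψ_ge
    have h2 : (∫ s in a..c', K⁻¹ * (r s)⁻¹) = K⁻¹ * ∫ s in a..c', (r s)⁻¹ :=
      intervalIntegral.integral_const_mul _ _
    have h3 : K * (x₀ + 1) ≤ ∫ s in a..c', (r s)⁻¹ := ha_ge
    have h4 : K⁻¹ * (K * (x₀ + 1)) ≤ K⁻¹ * ∫ s in a..c', (r s)⁻¹ := by
      apply mul_le_mul_of_nonneg_left h3 (by positivity)
    rw [inv_mul_cancel_left₀ hK_pos.ne'] at h4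
    linarith
  -- choose x₁ close to b with w x₁ < a
  have hwb : w b = 0 := hbS.2
  have hopen : IsOpen {x : ℝ | w x < a} := isOpen_lt hw_cont continuous_const
  have hb_mem : b ∈ {x : ℝ | w x < a} := by
    simp only [mem_setOf_eq, hwb]; exact ha_pos
  obtain ⟨δ, hδ_pos, hδ⟩ := Metric.isOpen_iff.mp hopen b hb_mem
  set x₁ : ℝ := min (b + δ/2) ((b + x₀)/2) with hx₁_def
  have hx₁_gt : b < x₁ := lt_min (by linarith) (by linarith)
  have hx₁_lt : x₁ < x₀ := (min_le_right _ _).trans_lt (by linarith)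
  have hx₁_ball : x₁ ∈ Metric.ball b δ := by
    rw [Metric.mem_ball, Real.dist_eq, abs_sub_lt_iff]
    constructor
    · have : x₁ ≤ b + δ/2 := min_le_left _ _
      linarith
    · linarith [hx₁_gt]
  have hwx₁_lt : w x₁ < a := hδ hx₁_ball
  have hwx₁_pos : 0 < w x₁ := hw_pos x₁ hx₁_gt hx₁_lt.le
  have hA : (∫ u in (w x₁)..a, ψ u) + (∫ u in a..c', ψ u) = ∫ u in (w x₁)..c', ψ u :=
    intervalIntegral.integral_add_adjacent_intervals (hψ_intble _ _ hwx₁_pos ha_pos)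
      (hψ_intble _ _ ha_pos hc'_pos)
  have hB : (∫ u in (w x₁)..c', ψ u) + (∫ u in c'..c, ψ u) = ∫ u in (w x₁)..c, ψ u :=
    intervalIntegral.integral_add_adjacent_intervals (hψ_intble _ _ hwx₁_pos hc'_pos)
      (hψ_intble _ _ hc'_pos hc_pos)
  have hnn1 : 0 ≤ ∫ u in (w x₁)..a, ψ u :=
    intervalIntegral.integral_nonneg hwx₁_lt.le (fun u hu => hψ_nonneg u (hwx₁_pos.trans_le hu.1))
  have hnn2 : 0 ≤ ∫ u in c'..c, ψ u :=
    intervalIntegral.integral_nonneg hc'_le (fun u hu => hψ_nonneg u (hc'_pos.trans_le hu.1))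
  have hge : x₀ + 1 ≤ F (w x₁) := by
    have hFeq : F (w x₁) = ∫ u in (w x₁)..c, ψ u := rfl
    rw [hFeq, ← hB, ← hA]
    linarith
  have hcl := claim x₁ hx₁_gt hx₁_lt.le
  have hx₁_pos : 0 < x₁ := hb_nonneg.trans_lt hx₁_gt
  linarith
end
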